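/- For real χ, the two functions S₁(ζ) := e^{(ζ−χ)²}(2(ζ−χ)²−1) and S₂(ζ) := √π·e^{(ζ−χ)²}·erf(ζ−χ)·(2(ζ−χ)²−1) + 2(ζ−χ) are solutions of the homogeneous ODE u'' − (2((ζ−χ)²+1)/(ζ−χ))·u' − 2u = 0 on ℂ \ {χ}, and their Wronskian equals W(ζ) = S₁(ζ)S₂'(ζ) − S₁'(ζ)S₂(ζ) = −8 e^{(ζ−χ)²}(ζ−χ)². -/

import Mathlib

open intervalIntegral Metric

lemma hasDerivAt_cerf (z : ℂ) :
    HasDerivAt (fun w : ℂ => w * ∫ t in (0:ℝ)..1, Complex.exp (-((t : ℂ) * w) ^ 2))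
      (Complex.exp (-z ^ 2)) z := by
  set F : ℂ → ℝ → ℂ := fun w t => Complex.exp (-((t : ℂ) * w) ^ 2) with hF
  set F' : ℂ → ℝ → ℂ := fun w t => (-2 * (t:ℂ)^2 * w) * Complex.exp (-((t : ℂ) * w) ^ 2) with hF'
  have hd : ∀ (w : ℂ) (t : ℝ), HasDerivAt (fun x => F x t) (F' w t) w := by
    intro w t
    have h1 : HasDerivAt (fun x : ℂ => -((t:ℂ) * x) ^ 2) (-2 * (t:ℂ)^2 * w) w := by
      have : HasDerivAt (fun x : ℂ => (t:ℂ) * x) (t:ℂ) w := by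
        simpa using (hasDerivAt_id w).const_mul (t:ℂ)
      simpa using ((this.fun_pow 2).fun_neg.congr_deriv (by ring))
    simpa [F, F', mul_comm] using h1.cexp
  have hcont : ∀ w : ℂ, Continuous (fun t : ℝ => F w t) := by
    intro w; fun_prop
  have hcont' : ∀ w : ℂ, Continuous (fun t : ℝ => F' w t) := by
    intro w; fun_prop
  -- derivative of the integral
  have key := hasDerivAt_integral_of_dominated_loc_of_deriv_le (F := F) (F' := F')
    (μ := MeasureTheory.volume) (a := 0) (b := 1)
    (bound := fun _ => 2 * (‖z‖ + 1) * Real.exp ((‖z‖ + 1) ^ 2))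
    (s := ball z 1) (ball_mem_nhds z one_pos)
    (Filter.Eventually.of_forall fun x => (hcont x).aestronglyMeasurable)
    ((hcont z).intervalIntegrable 0 1)
    ((hcont' z).aestronglyMeasurable)
    (Filter.Eventually.of_forall fun t ht x hx => by
      have ht' : t ∈ Set.Ioc (0:ℝ) 1 := by simpa [Set.uIoc_of_le] using ht
      have hxn : ‖x‖ ≤ ‖z‖ + 1 := by
        have h := mem_ball_iff_norm.mp hx
        have h2 := norm_sub_norm_le x z
        linarith
      have ht0 : 0 < t := ht'.1
      have ht1 : t ≤ 1 := ht'.2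
      have hre : (-(((t:ℂ)) * x) ^ 2).re ≤ (‖z‖ + 1) ^ 2 := by
        have : ‖-((t:ℂ) * x) ^ 2‖ ≤ (‖z‖ + 1) ^ 2 := by
          rw [norm_neg, norm_pow, norm_mul, Complex.norm_real]
          have : |t| * ‖x‖ ≤ 1 * (‖z‖ + 1) := by
            apply mul_le_mul (by rw [abs_of_pos ht0]; exact ht1) hxn (norm_nonneg _) one_pos.le
          calc (|t| * ‖x‖) ^ 2 ≤ (1 * (‖z‖+1)) ^ 2 := by
                apply pow_le_pow_left₀ (by positivity) this
            _ = (‖z‖ + 1) ^ 2 := by ring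
        exact (le_abs_self _).trans ((Complex.abs_re_le_norm _).trans this)
      calc ‖F' x t‖ = 2 * t ^ 2 * ‖x‖ * Real.exp ((-(((t:ℂ)) * x) ^ 2).re) := by
            rw [hF']
            simp only [norm_mul, Complex.norm_exp]
            rw [show ‖(-2:ℂ)‖ = 2 by simp,
              show ‖(t:ℂ)^2‖ = t^2 by
                rw [norm_pow, Complex.norm_real, Real.norm_eq_abs, abs_of_pos ht0]]
        _ ≤ 2 * 1 * (‖z‖ + 1) * Real.exp ((‖z‖ + 1) ^ 2) := by
            apply mul_le_mul _ (Real.exp_le_exp.mpr hre) (Real.exp_pos _).le (by positivity)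
            have h2 : t ^ 2 ≤ 1 := by nlinarith
            apply mul_le_mul _ hxn (norm_nonneg _) (by norm_num)
            nlinarith
        _ = 2 * (‖z‖ + 1) * Real.exp ((‖z‖ + 1) ^ 2) := by ring)
    (intervalIntegrable_const)
    (Filter.Eventually.of_forall fun t ht x hx => hd x t)
  obtain ⟨hF'int, hI⟩ := key
  -- FTC: ∫ (F z t + z * F' z t) dt = exp (-z^2)
  have hftc : (∫ t in (0:ℝ)..1, (F z t + z * F' z t)) = Complex.exp (-z ^ 2) := by
    have hG : ∀ t ∈ Set.uIcc (0:ℝ) 1, HasDerivAt (fun s : ℝ => (s:ℂ) * Complex.exp (-((s:ℂ) * z) ^ 2))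
        (F z t + z * F' z t) t := by
      intro t _
      have h1 : HasDerivAt (fun u : ℂ => u * Complex.exp (-(u * z) ^ 2))
          (Complex.exp (-((t:ℂ) * z) ^ 2) + (t:ℂ) * (Complex.exp (-((t:ℂ) * z) ^ 2) * (-2 * (t:ℂ) * z ^ 2))) (t:ℂ) := by
        have hu : HasDerivAt (fun u : ℂ => -(u * z) ^ 2) (-2 * (t:ℂ) * z ^ 2) (t:ℂ) := by
          have : HasDerivAt (fun u : ℂ => u * z) z (t:ℂ) := by
            simpa using (hasDerivAt_id ((t:ℂ))).mul_const z
          simpa using ((this.fun_pow 2).fun_neg.congr_deriv (by ring))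
        have := (hasDerivAt_id ((t:ℂ))).fun_mul hu.cexp
        convert! this using 1
        simp only [id_eq, one_mul]
      have := h1.comp_ofReal
      convert this using 1
      simp [F, F']
      ring
    have hcontG : ContinuousOn (fun t : ℝ => F z t + z * F' z t) (Set.uIcc (0:ℝ) 1) := by
      apply Continuous.continuousOn; fun_prop
    have := intervalIntegral.integral_eq_sub_of_hasDerivAt hG (hcontG.intervalIntegrable)
    simpa using this
  have hsplit : (∫ t in (0:ℝ)..1, (F z t + z * F' z t)) =
      (∫ t in (0:ℝ)..1, F z t) + z * ∫ t in (0:ℝ)..1, F' z t := by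
    rw [intervalIntegral.integral_add ((hcont z).intervalIntegrable 0 1)
      (hF'int.const_mul z), intervalIntegral.integral_const_mul]
  have := (hasDerivAt_id z).fun_mul hI
  convert! this using 1
  simp only [id_eq, one_mul]
  rw [← hftc, hsplit]

/-- Entire extension of the error function: `erf z = (2/√π) ∫_0^z e^{-t²} dt`. -/
noncomputable def cerf (z : ℂ) : ℂ :=
  (2 / Real.sqrt Real.pi : ℂ) * z * ∫ t in (0 : ℝ)..1, Complex.exp (-((t : ℂ) * z) ^ 2)

/-- First fundamental solution `S₁(ζ) = e^{(ζ−χ)²}(2(ζ−χ)²−1)`. -/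
noncomputable def solS1 (χ : ℝ) (ζ : ℂ) : ℂ :=
  Complex.exp ((ζ - χ) ^ 2) * (2 * (ζ - χ) ^ 2 - 1)

/-- Second fundamental solution
`S₂(ζ) = √π e^{(ζ−χ)²} erf(ζ−χ)(2(ζ−χ)²−1) + 2(ζ−χ)`. -/
noncomputable def solS2 (χ : ℝ) (ζ : ℂ) : ℂ :=
  (Real.sqrt Real.pi : ℂ) * Complex.exp ((ζ - χ) ^ 2) * cerf (ζ - χ) *
      (2 * (ζ - χ) ^ 2 - 1) + 2 * (ζ - χ)

lemma cerf_hasDerivAt (z : ℂ) :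
    HasDerivAt cerf ((2 / Real.sqrt Real.pi : ℂ) * Complex.exp (-z ^ 2)) z := by
  have h2 : cerf = fun w : ℂ => (2 / Real.sqrt Real.pi : ℂ) *
      (w * ∫ t in (0:ℝ)..1, Complex.exp (-((t : ℂ) * w) ^ 2)) := by
    funext w; simp [cerf, mul_assoc]
  rw [h2]
  exact (hasDerivAt_cerf z).const_mul _

section derivs
variable (χ : ℝ) (ζ : ℂ)

lemma hw1 : HasDerivAt (fun z : ℂ => z - (χ:ℂ)) 1 ζ := (hasDerivAt_id ζ).sub_const _

lemma hw2 : HasDerivAt (fun z : ℂ => (z - (χ:ℂ)) ^ 2) (2 * (ζ - χ)) ζ := by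
  simpa using (hw1 χ ζ).fun_pow 2

lemma hE : HasDerivAt (fun z : ℂ => Complex.exp ((z - χ) ^ 2))
    (Complex.exp ((ζ - χ) ^ 2) * (2 * (ζ - χ))) ζ := (hw2 χ ζ).cexp

lemma hcerfc : HasDerivAt (fun z : ℂ => cerf (z - χ))
    ((2 / Real.sqrt Real.pi : ℂ) * Complex.exp (-(ζ - χ) ^ 2)) ζ := by
  simpa [Function.comp_def] using (cerf_hasDerivAt (ζ - χ)).comp ζ (hw1 χ ζ)

lemma hP : HasDerivAt (fun z : ℂ => 2 * (z - (χ:ℂ)) ^ 2 - 1) (2 * (2 * (ζ - χ))) ζ :=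
  ((hw2 χ ζ).const_mul 2).sub_const 1

lemma hQ : HasDerivAt (fun z : ℂ => 4 * (z - (χ:ℂ)) ^ 3 + 2 * (z - (χ:ℂ)))
    (12 * (ζ - χ) ^ 2 + 2) ζ := by
  have h3 : HasDerivAt (fun z : ℂ => (z - (χ:ℂ)) ^ 3) (3 * (ζ - χ) ^ 2) ζ := by
    simpa using (hw1 χ ζ).fun_pow 3
  have := (h3.const_mul 4).fun_add ((hw1 χ ζ).const_mul 2)
  convert! this using 1; ring

lemma hS1 : HasDerivAt (solS1 χ)
    (Complex.exp ((ζ - χ) ^ 2) * (4 * (ζ - χ) ^ 3 + 2 * (ζ - χ))) ζ := by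
  have := (hE χ ζ).fun_mul (hP χ ζ)
  show HasDerivAt (fun z : ℂ => Complex.exp ((z - χ) ^ 2) * (2 * (z - χ) ^ 2 - 1)) _ ζ
  convert! this using 1; ring

lemma hS1' : HasDerivAt (fun z : ℂ => Complex.exp ((z - χ) ^ 2) * (4 * (z - χ) ^ 3 + 2 * (z - χ)))
    (Complex.exp ((ζ - χ) ^ 2) * (8 * (ζ - χ) ^ 4 + 16 * (ζ - χ) ^ 2 + 2)) ζ := by
  have := (hE χ ζ).fun_mul (hQ χ ζ)
  convert! this using 1; ring

lemma sqrt_pi_ne : ((Real.sqrt Real.pi : ℝ) : ℂ) ≠ 0 := by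
  exact_mod_cast (Real.sqrt_pos.mpr Real.pi_pos).ne'

lemma exp_cancel : Complex.exp ((ζ - χ) ^ 2) * Complex.exp (-(ζ - χ) ^ 2) = 1 := by
  rw [← Complex.exp_add]; simp

lemma hS2 : HasDerivAt (solS2 χ)
    ((Real.sqrt Real.pi : ℂ) * Complex.exp ((ζ - χ) ^ 2) * cerf (ζ - χ) *
      (4 * (ζ - χ) ^ 3 + 2 * (ζ - χ)) + 4 * (ζ - χ) ^ 2) ζ := by
  have h := ((((hE χ ζ).const_mul ((Real.sqrt Real.pi : ℝ) : ℂ)).fun_mul (hcerfc χ ζ)).fun_mul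
    (hP χ ζ)).fun_add ((hw1 χ ζ).const_mul 2)
  show HasDerivAt (fun z : ℂ => (Real.sqrt Real.pi : ℂ) * Complex.exp ((z - χ) ^ 2) *
      cerf (z - χ) * (2 * (z - χ) ^ 2 - 1) + 2 * (z - χ)) _ ζ
  convert! h using 1
  have hc := sqrt_pi_ne
  have he := exp_cancel χ ζ
  field_simp
  linear_combination (2 - 4 * (ζ - (χ:ℂ)) ^ 2) * he

lemma hS2' : HasDerivAt (fun z : ℂ => (Real.sqrt Real.pi : ℂ) * Complex.exp ((z - χ) ^ 2) *
      cerf (z - χ) * (4 * (z - χ) ^ 3 + 2 * (z - χ)) + 4 * (z - χ) ^ 2)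
    ((Real.sqrt Real.pi : ℂ) * Complex.exp ((ζ - χ) ^ 2) * cerf (ζ - χ) *
      (8 * (ζ - χ) ^ 4 + 16 * (ζ - χ) ^ 2 + 2) + 8 * (ζ - χ) ^ 3 + 12 * (ζ - χ)) ζ := by
  have h := ((((hE χ ζ).const_mul ((Real.sqrt Real.pi : ℝ) : ℂ)).fun_mul (hcerfc χ ζ)).fun_mul
    (hQ χ ζ)).fun_add ((hw2 χ ζ).const_mul 4)
  convert! h using 1
  have hc := sqrt_pi_ne
  have he := exp_cancel χ ζ
  field_simp
  linear_combination (-8 * (ζ - (χ:ℂ)) ^ 3 - 4 * (ζ - (χ:ℂ))) * he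

end derivs

theorem stmt_10 (χ : ℝ) (ζ : ℂ) (hζ : ζ ≠ (χ : ℂ)) :
    (deriv (deriv (solS1 χ)) ζ -
        2 * ((ζ - χ) ^ 2 + 1) / (ζ - χ) * deriv (solS1 χ) ζ - 2 * solS1 χ ζ = 0) ∧
    (deriv (deriv (solS2 χ)) ζ -
        2 * ((ζ - χ) ^ 2 + 1) / (ζ - χ) * deriv (solS2 χ) ζ - 2 * solS2 χ ζ = 0) ∧
    (solS1 χ ζ * deriv (solS2 χ) ζ - deriv (solS1 χ) ζ * solS2 χ ζ =
      -8 * Complex.exp ((ζ - χ) ^ 2) * (ζ - χ) ^ 2) := by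
  have hw0 : ζ - (χ:ℂ) ≠ 0 := sub_ne_zero.mpr hζ
  have d1 : deriv (solS1 χ) = fun z : ℂ =>
      Complex.exp ((z - χ) ^ 2) * (4 * (z - χ) ^ 3 + 2 * (z - χ)) :=
    funext fun z => (hS1 χ z).deriv
  have dd1 : deriv (deriv (solS1 χ)) ζ =
      Complex.exp ((ζ - χ) ^ 2) * (8 * (ζ - χ) ^ 4 + 16 * (ζ - χ) ^ 2 + 2) := by
    rw [d1]; exact (hS1' χ ζ).deriv
  have d2 : deriv (solS2 χ) = fun z : ℂ =>
      (Real.sqrt Real.pi : ℂ) * Complex.exp ((z - χ) ^ 2) * cerf (z - χ) *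
        (4 * (z - χ) ^ 3 + 2 * (z - χ)) + 4 * (z - χ) ^ 2 :=
    funext fun z => (hS2 χ z).deriv
  have dd2 : deriv (deriv (solS2 χ)) ζ =
      (Real.sqrt Real.pi : ℂ) * Complex.exp ((ζ - χ) ^ 2) * cerf (ζ - χ) *
        (8 * (ζ - χ) ^ 4 + 16 * (ζ - χ) ^ 2 + 2) + 8 * (ζ - χ) ^ 3 + 12 * (ζ - χ) := by
    rw [d2]; exact (hS2' χ ζ).deriv
  refine ⟨?_, ?_, ?_⟩
  · rw [dd1, d1, solS1]
    field_simp
    ring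
  · rw [dd2, d2, solS2]
    field_simp
    ring
  · rw [d1, d2, solS1, solS2]
    ring
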